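/- Let F : ℝ^n_{≥0} → ℝ be a C² function, x ∈ [0,1]^n with x ≠ 0, and σ ≥ 0. If for all i, j ∈ [n] one has ‖x‖₁·(∂²F/∂x_i∂x_j)(x) ≤ σ·((∂F/∂x_i)(x) + (∂F/∂x_j)(x)), then F is one-sided σ-smooth at x, i.e., for every u ≥ 0, (1/2)·uᵀ∇²F(x)u ≤ σ·(‖u‖₁/‖x‖₁)·uᵀ∇F(x). -/

import Mathlib

open scoped BigOperators

/-- The gradient of `F` at `x`: vector of partial derivatives. -/
noncomputable def grad {n : ℕ} (F : (Fin n → ℝ) → ℝ) (x : Fin n → ℝ) : Fin n → ℝ :=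
  fun i => fderiv ℝ F x (Pi.single i 1)

/-- The Hessian of `F` at `x`: matrix of second partial derivatives. -/
noncomputable def hess {n : ℕ} (F : (Fin n → ℝ) → ℝ) (x : Fin n → ℝ) : Fin n → Fin n → ℝ :=
  fun i j => fderiv ℝ (fun y => grad F y i) x (Pi.single j 1)

/-- Euclidean dot product `uᵀ v`. -/
noncomputable def dotp {n : ℕ} (u v : Fin n → ℝ) : ℝ := ∑ i, u i * v i

/-- The ℓ¹ norm `‖x‖₁`. -/
noncomputable def l1 {n : ℕ} (x : Fin n → ℝ) : ℝ := ∑ i, |x i|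

/-- The quadratic form `uᵀ H u`. -/
noncomputable def quadForm {n : ℕ} (H : Fin n → Fin n → ℝ) (u : Fin n → ℝ) : ℝ :=
  ∑ i, ∑ j, u i * H i j * u j

/-- The unit box `[0,1]^n`. -/
def box (n : ℕ) : Set (Fin n → ℝ) := Set.Icc 0 1

/-- `F` is one-sided σ-smooth at `x`:
`(1/2)·uᵀ∇²F(x)u ≤ σ·(‖u‖₁/‖x‖₁)·uᵀ∇F(x)` for all `u ≥ 0`. -/
def OSSAt {n : ℕ} (σ : ℝ) (F : (Fin n → ℝ) → ℝ) (x : Fin n → ℝ) : Prop :=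
  ∀ u : Fin n → ℝ, 0 ≤ u →
    (1 / 2 : ℝ) * quadForm (hess F x) u ≤ σ * (l1 u / l1 x) * dotp u (grad F x)

/-- Lemma `probabilisticVersion`.
Let `F` be C², `x ∈ [0,1]^n` with `x ≠ 0`, and `σ ≥ 0`.  If
`‖x‖₁·∂²F/∂x_i∂x_j(x) ≤ σ·(∂F/∂x_i(x) + ∂F/∂x_j(x))` for all `i, j`, then `F` is
one-sided σ-smooth at `x`: for every `u ≥ 0`,
`(1/2)·uᵀ∇²F(x)u ≤ σ·(‖u‖₁/‖x‖₁)·uᵀ∇F(x)`. -/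
theorem stmt17 {n : ℕ} (σ : ℝ) (hσ : 0 ≤ σ)
    (F : (Fin n → ℝ) → ℝ) (hF : ContDiff ℝ 2 F)
    (x : Fin n → ℝ) (hx : x ∈ box n) (hx0 : x ≠ 0)
    (hkey : ∀ i j : Fin n, l1 x * hess F x i j ≤ σ * (grad F x i + grad F x j)) :
    OSSAt σ F x := by
  have hxnn : 0 ≤ x := hx.1
  have hl1 : 0 < l1 x := by
    have hne : ∃ i, x i ≠ 0 := by
      by_contra h
      push_neg at h
      exact hx0 (funext fun i => h i)
    obtain ⟨i, hi⟩ := hne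
    have : 0 < |x i| := abs_pos.mpr hi
    have hle : |x i| ≤ l1 x :=
      Finset.single_le_sum (f := fun j => |x j|) (fun j _ => abs_nonneg _)
        (Finset.mem_univ i)
    linarith
  intro u hu
  set g := grad F x
  set H := hess F x
  have hl1u : l1 u = ∑ i, u i := by
    unfold l1; exact Finset.sum_congr rfl fun i _ => abs_of_nonneg (hu i)
  have key : l1 x * quadForm H u ≤ 2 * (σ * (l1 u * dotp u g)) := by
    have h1 : l1 x * quadForm H u = ∑ i, ∑ j, u i * u j * (l1 x * H i j) := by
      unfold quadForm
      rw [Finset.mul_sum]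
      refine Finset.sum_congr rfl fun i _ => ?_
      rw [Finset.mul_sum]
      refine Finset.sum_congr rfl fun j _ => ?_
      ring
    have h2 : ∑ i, ∑ j, u i * u j * (l1 x * H i j)
        ≤ ∑ i, ∑ j, u i * u j * (σ * (g i + g j)) := by
      refine Finset.sum_le_sum fun i _ => Finset.sum_le_sum fun j _ => ?_
      exact mul_le_mul_of_nonneg_left (hkey i j) (mul_nonneg (hu i) (hu j))
    have h3 : ∑ i, ∑ j, u i * u j * (σ * (g i + g j))
        = 2 * (σ * (l1 u * dotp u g)) := by
      have A : ∑ i, ∑ j, u i * u j * g i = (∑ i, u i * g i) * (∑ j, u j) := by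
        rw [Finset.sum_mul_sum]
        exact Finset.sum_congr rfl fun i _ => Finset.sum_congr rfl fun j _ => by ring
      have B : ∑ i, ∑ j, u i * u j * g j = (∑ i, u i * g i) * (∑ j, u j) := by
        rw [Finset.sum_comm, Finset.sum_mul_sum]
        exact Finset.sum_congr rfl fun i _ => Finset.sum_congr rfl fun j _ => by ring
      have split : ∑ i, ∑ j, u i * u j * (σ * (g i + g j))
          = σ * (∑ i, ∑ j, u i * u j * g i) + σ * (∑ i, ∑ j, u i * u j * g j) := by
        rw [Finset.mul_sum, Finset.mul_sum, ← Finset.sum_add_distrib]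
        refine Finset.sum_congr rfl fun i _ => ?_
        rw [Finset.mul_sum, Finset.mul_sum, ← Finset.sum_add_distrib]
        exact Finset.sum_congr rfl fun j _ => by ring
      rw [split, A, B, hl1u]
      unfold dotp
      ring
    linarith [h1 ▸ h2, h3 ▸ h2]
  have hrhs : σ * (l1 u / l1 x) * dotp u g = σ * (l1 u * dotp u g) / l1 x := by
    field_simp
  rw [hrhs, le_div_iff₀ hl1]
  nlinarith [key]
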